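/- Let A be a closed range operator on H such that |A| is diagonalizable, with polar decomposition A = V_A|A|. For each nonzero λ in the point spectrum of |A| let P_λ be the corresponding spectral projection and set V_λ = V_A P_λ. Then each V_λ is a partial isometry, A = Σ_λ λ V_λ (SOT convergence over nonzero eigenvalues), the families {V_λ V_λ*} and {V_λ* V_λ} each consist of mutually orthogonal projections, Σ_λ V_λ V_λ* = P_{R(A)}, and Σ_λ V_λ* V_λ = P_{R(A*)}. -/

import Mathlib

/-!
`V_A* V_A` is the orthogonal projection onto `N(A)ᗮ = N(|A|)ᗮ`: it kills `N(|A|)` and fixes every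
eigenvector of `|A|` with nonzero eigenvalue. Hence `V_λ* V_μ = P_λ P_μ`, which is `P_λ` for
`λ = μ` and `0` otherwise; this gives the partial isometries and both orthogonality statements.
The eigenspaces of `|A|` form a Hilbert sum decomposition of `H`, so `∑_λ P_λ x = x` over all
eigenvalues, and applying `V_A* V_A` discards `λ = 0`: `∑_{λ ≠ 0} P_λ = V_A* V_A`. The three
sums follow after composing with `A`, `V_A` or nothing, once closedness of `R(A)` identifies
`V_A V_A*` and `V_A* V_A` as the projections onto `R(A)` and `R(A*)`.
-/

open ContinuousLinearMap
open scoped ENNReal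

noncomputable section

variable {H : Type*} [NormedAddCommGroup H] [InnerProductSpace ℂ H] [CompleteSpace H]

/-- Reduced minimum modulus `γ(A) = inf {‖A f‖ : f ∈ N(A)ᗮ, ‖f‖ = 1}`. -/
def gamma (A : H →L[ℂ] H) : ℝ :=
  sInf {c : ℝ | ∃ f ∈ (LinearMap.ker (A : H →ₗ[ℂ] H))ᗮ, ‖f‖ = 1 ∧ c = ‖A f‖}

/-- `B` is the Moore–Penrose inverse of `A`. -/
def IsMoorePenrose (A B : H →L[ℂ] H) : Prop :=
  A ∘L B ∘L A = A ∧ B ∘L A ∘L B = B ∧ IsSelfAdjoint (A ∘L B) ∧ IsSelfAdjoint (B ∘L A)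

/-- `P` is an orthogonal projection. -/
def IsOrthoProj (P : H →L[ℂ] H) : Prop := P ∘L P = P ∧ IsSelfAdjoint P

/-- `P` is the orthogonal projection onto the subspace `S`. -/
def IsOrthoProjOnto (P : H →L[ℂ] H) (S : Submodule ℂ H) : Prop :=
  IsOrthoProj P ∧ LinearMap.range (P : H →ₗ[ℂ] H) = S

/-- `V` is a partial isometry. -/
def IsPartialIsom (V : H →L[ℂ] H) : Prop := V ∘L adjoint V ∘L V = V

/-- `A = V C` is the polar decomposition of `A`: `C = |A|` and `V = V_A` is the
partial isometry with `N(V) = N(A)`. -/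
def IsPolarDecomp (A V C : H →L[ℂ] H) : Prop :=
  A = V ∘L C ∧ C.IsPositive ∧ C ∘L C = adjoint A ∘L A ∧ IsPartialIsom V ∧
    LinearMap.ker (V : H →ₗ[ℂ] H) = LinearMap.ker (A : H →ₗ[ℂ] H)

/-- `J` is a two-sided ideal of `B(H)`. -/
structure IsTwoSidedIdeal (J : Set (H →L[ℂ] H)) : Prop where
  zero_mem : (0 : H →L[ℂ] H) ∈ J
  add_mem : ∀ {A B : H →L[ℂ] H}, A ∈ J → B ∈ J → A + B ∈ J
  neg_mem : ∀ {A : H →L[ℂ] H}, A ∈ J → -A ∈ J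
  mul_left : ∀ (B : H →L[ℂ] H) {A : H →L[ℂ] H}, A ∈ J → B ∘L A ∈ J
  mul_right : ∀ (B : H →L[ℂ] H) {A : H →L[ℂ] H}, A ∈ J → A ∘L B ∈ J

/-- `J` is a proper two-sided ideal of `B(H)`. -/
def IsProperIdeal (J : Set (H →L[ℂ] H)) : Prop :=
  IsTwoSidedIdeal J ∧ J ≠ {0} ∧ J ≠ Set.univ

/-- The `n`-th approximation number of `A`; for a compact operator this is the
`(n+1)`-th singular value `s_{n+1}(A)`. -/
def approxNum (A : H →L[ℂ] H) (n : ℕ) : ℝ :=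
  sInf {c : ℝ | ∃ F : H →L[ℂ] H, FiniteDimensional ℂ ↥(LinearMap.range (F : H →ₗ[ℂ] H)) ∧
    Module.finrank ℂ ↥(LinearMap.range (F : H →ₗ[ℂ] H)) ≤ n ∧ c = ‖A - F‖}

/-- Submajorization `s(B) ≺_w s(A)` of the singular value sequences. -/
def Submaj (B A : H →L[ℂ] H) : Prop :=
  ∀ n : ℕ, ∑ i ∈ Finset.range n, approxNum B i ≤ ∑ i ∈ Finset.range n, approxNum A i

/-- `J` is arithmetic mean closed. -/
def IsArithMeanClosed (J : Set (H →L[ℂ] H)) : Prop :=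
  ∀ A B : H →L[ℂ] H, A ∈ J → IsCompactOperator (⇑B) → Submaj B A → B ∈ J

/-- Symmetric norming function on the space of finitely supported real sequences. -/
structure IsSymmNormingFun (Φ : (ℕ →₀ ℝ) → ℝ) : Prop where
  triangle : ∀ x y, Φ (x + y) ≤ Φ x + Φ y
  homog : ∀ (c : ℝ) (x), Φ (c • x) = |c| * Φ x
  definite : ∀ x, Φ x = 0 → x = 0
  normalized : Φ (Finsupp.single 0 1) = 1
  symm : ∀ (σ : Equiv.Perm ℕ) (x), Φ (Finsupp.equivMapDomain σ x) = Φ x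
  abs_invariant : ∀ x, Φ (Finsupp.mapRange (fun t => |t|) abs_zero x) = Φ x

/-- The (possibly infinite) norm `‖A‖_Φ = sup_k Φ(s_1(A),…,s_k(A),0,…)`. -/
def phiNorm (Φ : (ℕ →₀ ℝ) → ℝ) (A : H →L[ℂ] H) : ℝ≥0∞ :=
  ⨆ k : ℕ, ENNReal.ofReal (Φ (∑ i ∈ Finset.range k, Finsupp.single i (approxNum A i)))

/-- `(P, Q)` is a Fredholm pair of projections: `Q P|_{R(P)} : R(P) → R(Q)` has
finite-dimensional kernel `R(P) ∩ N(Q)`, finite-dimensional cokernel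
(measured by `R(Q) ∩ N(P)`) and closed range. -/
def IsFredholmPair (P Q : H →L[ℂ] H) : Prop :=
  FiniteDimensional ℂ ↥(LinearMap.range (P : H →ₗ[ℂ] H) ⊓ LinearMap.ker (Q : H →ₗ[ℂ] H)) ∧
  FiniteDimensional ℂ ↥(LinearMap.range (Q : H →ₗ[ℂ] H) ⊓ LinearMap.ker (P : H →ₗ[ℂ] H)) ∧
  IsClosed (Q '' (LinearMap.range (P : H →ₗ[ℂ] H) : Set H))

/-- Essential codimension `[P : Q] = dim(N(Q) ∩ R(P)) − dim(R(Q) ∩ N(P))`. -/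
def essCodim (P Q : H →L[ℂ] H) : ℤ :=
  (Module.finrank ℂ ↥(LinearMap.range (P : H →ₗ[ℂ] H) ⊓ LinearMap.ker (Q : H →ₗ[ℂ] H)) : ℤ) -
    (Module.finrank ℂ ↥(LinearMap.range (Q : H →ₗ[ℂ] H) ⊓ LinearMap.ker (P : H →ₗ[ℂ] H)) : ℤ)

/-- `{f n}` is a frame for the closed subspace `S`. -/
def IsFrameFor (f : ℕ → H) (S : Submodule ℂ H) : Prop :=
  IsClosed (S : Set H) ∧ (∀ n, f n ∈ S) ∧
  ∃ α β : ℝ, 0 < α ∧ α ≤ β ∧ ∀ v ∈ S,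
    α * ‖v‖ ^ 2 ≤ ∑' n, ‖(inner ℂ v (f n) : ℂ)‖ ^ 2 ∧
    ∑' n, ‖(inner ℂ v (f n) : ℂ)‖ ^ 2 ≤ β * ‖v‖ ^ 2

/-- The nonzero point spectrum of `CA`, as an index type. -/
def specIdx (CA : H →L[ℂ] H) : Type _ :=
  {lam : ℝ // lam ≠ 0 ∧ LinearMap.ker (↑(CA - (lam : ℂ) • (1 : H →L[ℂ] H)) : H →ₗ[ℂ] H) ≠ ⊥}

open scoped InnerProductSpace

theorem OrthogonalFamily.hasSum_starProjection {𝕜 E ι : Type*} [RCLike 𝕜]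
    [NormedAddCommGroup E] [InnerProductSpace 𝕜 E] [CompleteSpace E]
    {V : ι → Submodule 𝕜 E} [∀ i, CompleteSpace (V i)]
    (hV : OrthogonalFamily 𝕜 (fun i => V i) fun i => (V i).subtypeₗᵢ)
    (hVtotal : ⊤ ≤ (⨆ i, V i).topologicalClosure) (x : E) :
    HasSum (fun i => (V i).starProjection x) x := by
  classical
  have hHS := IsHilbertSum.mkInternal V hV hVtotal
  set w := hHS.linearIsometryEquiv x
  have hw : HasSum (fun i => (w i : E)) x := by
    simpa [w] using hHS.hasSum_linearIsometryEquiv_symm w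
  convert hw with i
  -- project the expansion of `x` onto `V i`: only its `i`-th term survives
  refine (hw.mapL (V i).starProjection).unique ?_
  convert hasSum_ite_eq i (w i : E) with j
  split_ifs with hji
  · subst hji
    exact Submodule.starProjection_eq_self_iff.mpr (w j).2
  · exact (Submodule.starProjection_apply_eq_zero_iff _).mpr (hV.isOrtho hji (w j).2)

theorem ContinuousLinearMap.adjoint_apply_mem_orthogonal_ker {𝕜 E F : Type*} [RCLike 𝕜]
    [NormedAddCommGroup E] [InnerProductSpace 𝕜 E] [CompleteSpace E]
    [NormedAddCommGroup F] [InnerProductSpace 𝕜 F] [CompleteSpace F]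
    (T : E →L[𝕜] F) (y : F) : adjoint T y ∈ (LinearMap.ker (T : E →ₗ[𝕜] F))ᗮ := by
  rw [orthogonal_ker]
  exact Submodule.le_topologicalClosure _ ⟨y, rfl⟩

section OrthoProj

variable {P R : H →L[ℂ] H} {K : Submodule ℂ H}

theorem IsOrthoProj.isStarProjection (hP : IsOrthoProj P) : IsStarProjection P :=
  ⟨hP.1, hP.2⟩

theorem IsOrthoProj.apply_apply (hP : IsOrthoProj P) (x : H) : P (P x) = P x :=
  congr($(hP.1) x)

theorem IsOrthoProjOnto.eq_of_range_eq (hP : IsOrthoProjOnto P K) (hR : IsOrthoProj R)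
    (hRK : LinearMap.range (R : H →ₗ[ℂ] H) = K) : P = R :=
  hP.1.isStarProjection.ext hR.isStarProjection (hP.2.trans hRK.symm)

theorem IsOrthoProjOnto.eq_starProjection [K.HasOrthogonalProjection] (hP : IsOrthoProjOnto P K) :
    P = K.starProjection :=
  hP.eq_of_range_eq ⟨K.isIdempotentElem_starProjection, isSelfAdjoint_starProjection K⟩
    K.range_starProjection

end OrthoProj

namespace IsPartialIsom

variable {V : H →L[ℂ] H}

theorem apply_adjoint_apply (hV : IsPartialIsom V) (x : H) : V (adjoint V (V x)) = V x :=
  congr($hV x)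

theorem isOrthoProj_adjoint_comp_self (hV : IsPartialIsom V) : IsOrthoProj (adjoint V ∘L V) :=
  ⟨by ext x; simp [hV.apply_adjoint_apply], IsSelfAdjoint.star_mul_self V⟩

theorem isOrthoProj_comp_adjoint (hV : IsPartialIsom V) : IsOrthoProj (V ∘L adjoint V) :=
  ⟨by ext x; simp [hV.apply_adjoint_apply], IsSelfAdjoint.mul_star_self V⟩

end IsPartialIsom

theorem adjoint_comp_comp_comp_eq_comp {V P P' : H →L[ℂ] H} (hP : IsSelfAdjoint P)
    (hVP' : (adjoint V ∘L V) ∘L P' = P') :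
    adjoint (V ∘L P) ∘L (V ∘L P') = P ∘L P' := by
  ext x
  simpa [adjoint_comp, hP.adjoint_eq] using congr(P ($hVP' x))

theorem isPartialIsom_comp_of_adjoint_comp_self_comp {V P : H →L[ℂ] H} (hP : IsOrthoProj P)
    (hVP : (adjoint V ∘L V) ∘L P = P) : IsPartialIsom (V ∘L P) := by
  unfold IsPartialIsom
  rw [adjoint_comp_comp_comp_eq_comp hP.2 hVP, hP.1, comp_assoc, hP.1]

namespace IsPolarDecomp

variable {A V C : H →L[ℂ] H}

theorem isSelfAdjoint_abs (h : IsPolarDecomp A V C) : IsSelfAdjoint C :=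
  h.2.1.isSelfAdjoint

theorem isPartialIsom (h : IsPolarDecomp A V C) : IsPartialIsom V :=
  h.2.2.2.1

theorem norm_abs_apply (h : IsPolarDecomp A V C) (x : H) : ‖C x‖ = ‖A x‖ := by
  refine (sq_eq_sq₀ (norm_nonneg _) (norm_nonneg _)).mp ?_
  rw [apply_norm_sq_eq_inner_adjoint_left, apply_norm_sq_eq_inner_adjoint_left,
    h.isSelfAdjoint_abs.adjoint_eq, h.2.2.1]

theorem ker_partialIsom (h : IsPolarDecomp A V C) :
    LinearMap.ker (V : H →ₗ[ℂ] H) = LinearMap.ker (C : H →ₗ[ℂ] H) := by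
  rw [h.2.2.2.2]
  ext x
  simp [← norm_eq_zero (a := C x), h.norm_abs_apply]

theorem adjoint_eq (h : IsPolarDecomp A V C) : adjoint A = C ∘L adjoint V := by
  rw [h.1, adjoint_comp, h.isSelfAdjoint_abs.adjoint_eq]

theorem abs_comp_adjoint_comp_self (h : IsPolarDecomp A V C) : C ∘L (adjoint V ∘L V) = C := by
  ext y
  have hker : adjoint V (V y) - y ∈ LinearMap.ker (V : H →ₗ[ℂ] H) := by
    simp [h.isPartialIsom.apply_adjoint_apply]
  rw [h.ker_partialIsom] at hker
  simpa [sub_eq_zero] using hker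

theorem comp_adjoint_comp_self (h : IsPolarDecomp A V C) : A ∘L (adjoint V ∘L V) = A := by
  rw [h.1, comp_assoc, h.abs_comp_adjoint_comp_self]

theorem adjoint_comp_self_comp_abs (h : IsPolarDecomp A V C) : (adjoint V ∘L V) ∘L C = C := by
  simpa [adjoint_comp, h.isSelfAdjoint_abs.adjoint_eq] using
    congr(adjoint $(h.abs_comp_adjoint_comp_self))

/-- In general `R(V* V) = N(|A|)ᗮ` is only the closure of `R(|A|)`; closedness of `R(A)` gives
equality. -/
theorem adjoint_comp_self_apply_mem_range_abs (h : IsPolarDecomp A V C)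
    (hAcl : IsClosed (LinearMap.range (A : H →ₗ[ℂ] H) : Set H)) (y : H) :
    adjoint V (V y) ∈ LinearMap.range (C : H →ₗ[ℂ] H) := by
  have hC := h.isSelfAdjoint_abs
  have hz : adjoint V (V y) ∈ (LinearMap.ker (C : H →ₗ[ℂ] H))ᗮ :=
    h.ker_partialIsom ▸ V.adjoint_apply_mem_orthogonal_ker (V y)
  have hclos : adjoint V (V y) ∈ closure (LinearMap.range (C : H →ₗ[ℂ] H) : Set H) := by
    rwa [orthogonal_ker, hC.adjoint_eq] at hz
  obtain ⟨v, hv⟩ : V (adjoint V (V y)) ∈ LinearMap.range (A : H →ₗ[ℂ] H) := by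
    rw [← SetLike.mem_coe, ← hAcl.closure_eq]
    refine map_mem_closure V.continuous hclos ?_
    rintro _ ⟨u, rfl⟩
    exact ⟨u, by simp [h.1]⟩
  have hCv : C v ∈ (LinearMap.ker (C : H →ₗ[ℂ] H))ᗮ := by
    simpa [hC.adjoint_eq] using C.adjoint_apply_mem_orthogonal_ker v
  have hker : adjoint V (V y) - C v ∈ LinearMap.ker (C : H →ₗ[ℂ] H) := by
    rw [← h.ker_partialIsom]
    simp [← hv, h.1]
  refine ⟨v, ?_⟩
  have hdiff := Submodule.disjoint_def.mp (LinearMap.ker (C : H →ₗ[ℂ] H)).orthogonal_disjoint _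
    hker (Submodule.sub_mem _ hz hCv)
  simpa using (sub_eq_zero.mp hdiff).symm

theorem range_adjoint_comp_self (h : IsPolarDecomp A V C)
    (hAcl : IsClosed (LinearMap.range (A : H →ₗ[ℂ] H) : Set H)) :
    LinearMap.range (↑(adjoint V ∘L V) : H →ₗ[ℂ] H) =
      LinearMap.range (↑(adjoint A) : H →ₗ[ℂ] H) := by
  apply le_antisymm
  · rintro _ ⟨y, rfl⟩
    obtain ⟨v, hv⟩ := h.adjoint_comp_self_apply_mem_range_abs hAcl y
    refine ⟨V v, ?_⟩
    simpa [h.adjoint_eq, ← hv] using congr($(h.abs_comp_adjoint_comp_self) v)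
  · rintro _ ⟨u, rfl⟩
    refine ⟨C (adjoint V u), ?_⟩
    simpa [h.adjoint_eq] using congr($(h.adjoint_comp_self_comp_abs) (adjoint V u))

theorem range_comp_adjoint (h : IsPolarDecomp A V C)
    (hAcl : IsClosed (LinearMap.range (A : H →ₗ[ℂ] H) : Set H)) :
    LinearMap.range (↑(V ∘L adjoint V) : H →ₗ[ℂ] H) = LinearMap.range (A : H →ₗ[ℂ] H) := by
  have hV := h.isPartialIsom
  apply le_antisymm
  · rintro _ ⟨x, rfl⟩
    obtain ⟨v, hv⟩ := h.adjoint_comp_self_apply_mem_range_abs hAcl (adjoint V x)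
    refine ⟨v, ?_⟩
    have hv' : C v = adjoint V (V (adjoint V x)) := hv
    simpa [h.1, hv'] using hV.apply_adjoint_apply (adjoint V x)
  · rintro _ ⟨u, rfl⟩
    refine ⟨V (C u), ?_⟩
    simpa [h.1] using hV.apply_adjoint_apply (C u)

end IsPolarDecomp

omit [CompleteSpace H] in
abbrev realEigenspace (T : H →L[ℂ] H) (lam : ℝ) : Submodule ℂ H :=
  LinearMap.ker (↑(T - (lam : ℂ) • (1 : H →L[ℂ] H)) : H →ₗ[ℂ] H)

omit [CompleteSpace H] in
theorem mem_realEigenspace_iff {T : H →L[ℂ] H} {lam : ℝ} {v : H} :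
    v ∈ realEigenspace T lam ↔ T v = (lam : ℂ) • v := by
  simp [sub_eq_zero]

omit [CompleteSpace H] in
theorem realEigenspace_eq_eigenspace (T : H →L[ℂ] H) (lam : ℝ) :
    realEigenspace T lam = Module.End.eigenspace (T : H →ₗ[ℂ] H) lam := by
  rw [Module.End.eigenspace_def]
  rfl

theorem IsSelfAdjoint.orthogonalFamily_realEigenspace {T : H →L[ℂ] H} (hT : IsSelfAdjoint T) :
    OrthogonalFamily ℂ (fun lam => realEigenspace T lam)
      fun lam => (realEigenspace T lam).subtypeₗᵢ := by
  rw [orthogonalFamily_iff_pairwise]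
  intro l m hlm
  show realEigenspace T l ⟂ realEigenspace T m
  simpa only [realEigenspace_eq_eigenspace] using
    hT.isSymmetric.orthogonalFamily_eigenspaces.isOrtho (Complex.ofReal_injective.ne hlm)

def IsEigenprojFamily (T : H →L[ℂ] H) (P : ℝ → H →L[ℂ] H) : Prop :=
  ∀ lam, IsOrthoProjOnto (P lam) (realEigenspace T lam)

namespace IsEigenprojFamily

variable {T : H →L[ℂ] H} {P : ℝ → H →L[ℂ] H}

theorem eq_starProjection (hP : IsEigenprojFamily T P) (lam : ℝ) :
    P lam = (realEigenspace T lam).starProjection :=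
  (hP lam).eq_starProjection

theorem apply_mem (hP : IsEigenprojFamily T P) (lam : ℝ) (x : H) :
    P lam x ∈ realEigenspace T lam :=
  (hP lam).2 ▸ LinearMap.mem_range_self _ x

theorem apply_apply (hP : IsEigenprojFamily T P) (lam : ℝ) (x : H) :
    T (P lam x) = (lam : ℂ) • P lam x :=
  mem_realEigenspace_iff.mp (hP.apply_mem lam x)

theorem eq_zero (hP : IsEigenprojFamily T P) {lam : ℝ} (hlam : realEigenspace T lam = ⊥) :
    P lam = 0 := by
  ext x
  simpa [hlam] using hP.apply_mem lam x

theorem comp_eq_zero (hP : IsEigenprojFamily T P) (hT : IsSelfAdjoint T) {l m : ℝ} (hlm : l ≠ m) :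
    P l ∘L P m = 0 := by
  rw [hP.eq_starProjection, hP.eq_starProjection,
    Submodule.starProjection_comp_starProjection_eq_zero_iff]
  exact hT.orthogonalFamily_realEigenspace.isOrtho hlm

theorem hasSum (hP : IsEigenprojFamily T P) (hT : IsSelfAdjoint T)
    (hdiag : (⨆ lam, realEigenspace T lam).topologicalClosure = ⊤) (x : H) :
    HasSum (fun lam => P lam x) x := by
  simp_rw [hP.eq_starProjection]
  exact hT.orthogonalFamily_realEigenspace.hasSum_starProjection hdiag.ge x

end IsEigenprojFamily

namespace IsPolarDecomp

variable {A V C : H →L[ℂ] H} {P : ℝ → H →L[ℂ] H}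

theorem adjoint_comp_self_comp_eigenproj (h : IsPolarDecomp A V C) (hP : IsEigenprojFamily C P)
    {lam : ℝ} (hlam : lam ≠ 0) : (adjoint V ∘L V) ∘L P lam = P lam := by
  ext x
  have hx : P lam x = (lam : ℂ)⁻¹ • C (P lam x) := by
    rw [hP.apply_apply, smul_smul, inv_mul_cancel₀ (by exact_mod_cast hlam), one_smul]
  rw [comp_apply, hx, map_smul, ← comp_apply (adjoint V ∘L V) C, h.adjoint_comp_self_comp_abs]

theorem comp_eigenproj (h : IsPolarDecomp A V C) (hP : IsEigenprojFamily C P) (lam : ℝ) :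
    A ∘L P lam = (lam : ℂ) • (V ∘L P lam) := by
  ext x
  simp [h.1, hP.apply_apply]

theorem comp_eigenproj_zero (h : IsPolarDecomp A V C) (hP : IsEigenprojFamily C P) :
    V ∘L P 0 = 0 := by
  ext x
  have hx : P 0 x ∈ LinearMap.ker (V : H →ₗ[ℂ] H) := by
    simpa [h.ker_partialIsom] using hP.apply_apply 0 x
  simpa using hx

theorem hasSum_eigenproj_specIdx (h : IsPolarDecomp A V C) (hP : IsEigenprojFamily C P)
    (hdiag : (⨆ lam, realEigenspace C lam).topologicalClosure = ⊤) (x : H) :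
    HasSum (fun l : specIdx C => P l.1 x) (adjoint V (V x)) := by
  have hsupp : Function.support (fun lam => (adjoint V ∘L V) (P lam x)) ⊆
      {lam | lam ≠ 0 ∧ realEigenspace C lam ≠ ⊥} := by
    intro lam hlam
    refine ⟨?_, fun hbot => hlam ?_⟩
    · rintro rfl
      exact hlam (by simpa using congr(adjoint V ($(h.comp_eigenproj_zero hP) x)))
    · simp [hP.eq_zero hbot]
  have hsum := (hasSum_subtype_iff_of_support_subset hsupp).mpr
    ((hP.hasSum h.isSelfAdjoint_abs hdiag x).mapL (adjoint V ∘L V))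
  have hterm : (fun l : specIdx C => P l.1 x) =
      (fun lam => (adjoint V ∘L V) (P lam x)) ∘ Subtype.val :=
    funext fun l => congr($(h.adjoint_comp_self_comp_eigenproj hP l.2.1) x).symm
  rw [hterm]
  exact hsum

end IsPolarDecomp

theorem stmt_16_general
    (A VA CA : H →L[ℂ] H)
    (hAcl : IsClosed (LinearMap.range (A : H →ₗ[ℂ] H) : Set H))
    (hApd : IsPolarDecomp A VA CA)
    (P : ℝ → H →L[ℂ] H)
    (hP : ∀ lam : ℝ,
      IsOrthoProjOnto (P lam) (LinearMap.ker (↑(CA - (lam : ℂ) • (1 : H →L[ℂ] H)) : H →ₗ[ℂ] H)))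
    (hdiag : (⨆ lam : ℝ,
      LinearMap.ker (↑(CA - (lam : ℂ) • (1 : H →L[ℂ] H)) : H →ₗ[ℂ] H)).topologicalClosure = ⊤)
    (PRA PRAs : H →L[ℂ] H)
    (hPRA : IsOrthoProjOnto PRA (LinearMap.range (A : H →ₗ[ℂ] H)))
    (hPRAs : IsOrthoProjOnto PRAs (LinearMap.range (↑(adjoint A) : H →ₗ[ℂ] H))) :
    (∀ l : specIdx CA, IsPartialIsom (VA ∘L P l.1)) ∧
    (∀ x : H, HasSum (fun l : specIdx CA => (l.1 : ℂ) • (VA ∘L P l.1) x) (A x)) ∧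
    (∀ l m : specIdx CA, l ≠ m →
      IsOrthoProj ((VA ∘L P l.1) ∘L adjoint (VA ∘L P l.1)) ∧
      ((VA ∘L P l.1) ∘L adjoint (VA ∘L P l.1)) ∘L
        ((VA ∘L P m.1) ∘L adjoint (VA ∘L P m.1)) = 0) ∧
    (∀ l m : specIdx CA, l ≠ m →
      IsOrthoProj (adjoint (VA ∘L P l.1) ∘L (VA ∘L P l.1)) ∧
      (adjoint (VA ∘L P l.1) ∘L (VA ∘L P l.1)) ∘L
        (adjoint (VA ∘L P m.1) ∘L (VA ∘L P m.1)) = 0) ∧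
    (∀ x : H, HasSum
      (fun l : specIdx CA => ((VA ∘L P l.1) ∘L adjoint (VA ∘L P l.1)) x) (PRA x)) ∧
    (∀ x : H, HasSum
      (fun l : specIdx CA => (adjoint (VA ∘L P l.1) ∘L (VA ∘L P l.1)) x) (PRAs x)) := by
  have hQP (l : specIdx CA) := hApd.adjoint_comp_self_comp_eigenproj hP l.2.1
  have hpi (l : specIdx CA) : IsPartialIsom (VA ∘L P l.1) :=
    isPartialIsom_comp_of_adjoint_comp_self_comp (hP l.1).1 (hQP l)
  have hVV (l m : specIdx CA) : adjoint (VA ∘L P l.1) ∘L (VA ∘L P m.1) = P l.1 ∘L P m.1 :=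
    adjoint_comp_comp_comp_eq_comp (hP l.1).1.2 (hQP m)
  have hPP {l m : specIdx CA} (hlm : l ≠ m) : P l.1 ∘L P m.1 = 0 :=
    IsEigenprojFamily.comp_eq_zero hP hApd.isSelfAdjoint_abs (Subtype.coe_injective.ne hlm)
  have hsum := hApd.hasSum_eigenproj_specIdx hP hdiag
  refine ⟨hpi, fun x => ?_, fun l m hlm => ⟨(hpi l).isOrthoProj_comp_adjoint, ?_⟩,
    fun l m hlm => ?_, fun x => ?_, fun x => ?_⟩
  · convert (hsum x).mapL A using 1
    · funext l
      exact congr($(hApd.comp_eigenproj hP l.1) x).symm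
    · exact congr($(hApd.comp_adjoint_comp_self) x).symm
  · rw [comp_assoc, ← comp_assoc (adjoint (VA ∘L P l.1)), hVV, hPP hlm, zero_comp, comp_zero]
  · rw [hVV, hVV, (hP l.1).1.1, (hP m.1).1.1]
    exact ⟨(hP l.1).1, hPP hlm⟩
  · rw [hPRA.eq_of_range_eq hApd.isPartialIsom.isOrthoProj_comp_adjoint
      (hApd.range_comp_adjoint hAcl)]
    convert (hsum (adjoint VA x)).mapL VA using 1
    · funext l
      simp [adjoint_comp, (hP l.1).1.2.adjoint_eq, (hP l.1).1.apply_apply]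
    · simp [hApd.isPartialIsom.apply_adjoint_apply]
  · rw [hPRAs.eq_of_range_eq hApd.isPartialIsom.isOrthoProj_adjoint_comp_self
      (hApd.range_adjoint_comp_self hAcl)]
    simpa only [hVV, (hP _).1.1, comp_apply] using hsum x

/-- block singular value decomposition: Let `A` be a closed range
operator with `|A|` diagonalizable and polar decomposition `A = V_A|A|`. For
each nonzero eigenvalue `λ` of `|A|` with spectral projection `P λ`, the
operators `V_λ = V_A P_λ` are partial isometries, `A = Σ_λ λ V_λ` (SOT), the
families `{V_λ V_λ*}` and `{V_λ* V_λ}` consist of mutually orthogonal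
projections, `Σ_λ V_λ V_λ* = P_{R(A)}` and `Σ_λ V_λ* V_λ = P_{R(A*)}`. -/
theorem stmt_16 [TopologicalSpace.SeparableSpace H]
    (A VA CA : H →L[ℂ] H)
    (hAcl : IsClosed (LinearMap.range (A : H →ₗ[ℂ] H) : Set H))
    (hApd : IsPolarDecomp A VA CA)
    (P : ℝ → H →L[ℂ] H)
    (hP : ∀ lam : ℝ,
      IsOrthoProjOnto (P lam) (LinearMap.ker (↑(CA - (lam : ℂ) • (1 : H →L[ℂ] H)) : H →ₗ[ℂ] H)))
    (hdiag : (⨆ lam : ℝ,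
      LinearMap.ker (↑(CA - (lam : ℂ) • (1 : H →L[ℂ] H)) : H →ₗ[ℂ] H)).topologicalClosure = ⊤)
    (PRA PRAs : H →L[ℂ] H)
    (hPRA : IsOrthoProjOnto PRA (LinearMap.range (A : H →ₗ[ℂ] H)))
    (hPRAs : IsOrthoProjOnto PRAs (LinearMap.range (↑(adjoint A) : H →ₗ[ℂ] H))) :
    (∀ l : specIdx CA, IsPartialIsom (VA ∘L P l.1)) ∧
    (∀ x : H, HasSum (fun l : specIdx CA => (l.1 : ℂ) • (VA ∘L P l.1) x) (A x)) ∧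
    (∀ l m : specIdx CA, l ≠ m →
      IsOrthoProj ((VA ∘L P l.1) ∘L adjoint (VA ∘L P l.1)) ∧
      ((VA ∘L P l.1) ∘L adjoint (VA ∘L P l.1)) ∘L
        ((VA ∘L P m.1) ∘L adjoint (VA ∘L P m.1)) = 0) ∧
    (∀ l m : specIdx CA, l ≠ m →
      IsOrthoProj (adjoint (VA ∘L P l.1) ∘L (VA ∘L P l.1)) ∧
      (adjoint (VA ∘L P l.1) ∘L (VA ∘L P l.1)) ∘L
        (adjoint (VA ∘L P m.1) ∘L (VA ∘L P m.1)) = 0) ∧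
    (∀ x : H, HasSum
      (fun l : specIdx CA => ((VA ∘L P l.1) ∘L adjoint (VA ∘L P l.1)) x) (PRA x)) ∧
    (∀ x : H, HasSum
      (fun l : specIdx CA => (adjoint (VA ∘L P l.1) ∘L (VA ∘L P l.1)) x) (PRAs x)) :=
  stmt_16_general A VA CA hAcl hApd P hP hdiag PRA PRAs hPRA hPRAs

end
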